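/- arXiv:1908.02633 — 2 statements merged into one kernel-verified Lean document; each statement's English description precedes it below -/
import Mathlib

section
/- Let P be a prop, C a symmetric monoidal category, and s a supply of P in C. Then: every identity morphism of C is an s-homomorphism; if f : c → d and g : d → e are s-homomorphisms, then f ≫ g is an s-homomorphism; and if f₁ : c₁ → d₁ and f₂ : c₂ → d₂ are s-homomorphisms, then f₁ ⊗ f₂ : c₁ ⊗ c₂ → d₁ ⊗ d₂ is an s-homomorphism. -/
open CategoryTheory MonoidalCategory

universe v u

/-- A prop: a strict symmetric monoidal category whose objects are the natural numbers,
with tensor product of objects given by addition and unit `0`. -/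
structure PROP where
  Hom : ℕ → ℕ → Type
  id : ∀ m, Hom m m
  comp : ∀ {m n p}, Hom m n → Hom n p → Hom m p
  id_comp : ∀ {m n} (f : Hom m n), comp (id m) f = f
  comp_id : ∀ {m n} (f : Hom m n), comp f (id n) = f
  assoc : ∀ {m n p q} (f : Hom m n) (g : Hom n p) (h : Hom p q),
    comp (comp f g) h = comp f (comp g h)
  add : ∀ {m₁ n₁ m₂ n₂}, Hom m₁ n₁ → Hom m₂ n₂ → Hom (m₁ + m₂) (n₁ + n₂)
  add_id : ∀ m n, add (id m) (id n) = id (m + n)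
  add_comp : ∀ {m₁ n₁ p₁ m₂ n₂ p₂} (f₁ : Hom m₁ n₁) (g₁ : Hom n₁ p₁)
    (f₂ : Hom m₂ n₂) (g₂ : Hom n₂ p₂),
    add (comp f₁ g₁) (comp f₂ g₂) = comp (add f₁ f₂) (add g₁ g₂)
  add_assoc : ∀ {m₁ n₁ m₂ n₂ m₃ n₃} (f₁ : Hom m₁ n₁) (f₂ : Hom m₂ n₂) (f₃ : Hom m₃ n₃),
    HEq (add (add f₁ f₂) f₃) (add f₁ (add f₂ f₃))
  add_zero : ∀ {m n} (f : Hom m n), add f (id 0) = f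
  zero_add : ∀ {m n} (f : Hom m n), HEq (add (id 0) f) f
  braid : ∀ m n, Hom (m + n) (n + m)
  braid_naturality : ∀ {m₁ n₁ m₂ n₂} (f : Hom m₁ n₁) (g : Hom m₂ n₂),
    comp (add f g) (braid n₁ n₂) = comp (braid m₁ m₂) (add g f)
  symmetry : ∀ m n, comp (braid m n) (braid n m) = id (m + n)
  hexagon : ∀ m n p,
    HEq (braid (m + n) p)
      (comp (cast (by rw [Nat.add_assoc, Nat.add_assoc] :
              Hom (m + (n + p)) (m + (p + n)) = Hom ((m + n) + p) ((m + p) + n))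
            (add (id m) (braid n p)))
        (add (braid m p) (id n)))

section

variable {C : Type u} [Category.{v} C] [MonoidalCategory C]

/-- The left-bracketed `m`-fold tensor power of an object. -/
def pow (c : C) : ℕ → C
  | 0 => 𝟙_ C
  | n + 1 => pow c n ⊗ c

/-- The `m`-fold tensor power of a morphism. -/
def powHom {c d : C} (f : c ⟶ d) : ∀ m, pow c m ⟶ pow d m
  | 0 => 𝟙 _
  | m + 1 => powHom f m ⊗ₘ f

/-- The canonical coherence isomorphism `c^⊗m ⊗ c^⊗n ≅ c^⊗(m+n)`. -/
def powAdd (c : C) : ∀ m n, pow c m ⊗ pow c n ≅ pow c (m + n)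
  | m, 0 => ρ_ (pow c m)
  | m, n + 1 => (α_ (pow c m) (pow c n) c).symm ≪≫ whiskerRightIso (powAdd c m n) c

variable [SymmetricCategory C]

/-- The canonical "middle four exchange" coherence isomorphism. -/
def exch (a b e f : C) : (a ⊗ b) ⊗ (e ⊗ f) ≅ (a ⊗ e) ⊗ (b ⊗ f) :=
  α_ a b (e ⊗ f) ≪≫
    whiskerLeftIso a ((α_ b e f).symm ≪≫ whiskerRightIso (β_ b e) f ≪≫ α_ e b f) ≪≫
      (α_ a e (b ⊗ f)).symm

/-- The canonical coherence isomorphism `σ : c^⊗m ⊗ d^⊗m ≅ (c ⊗ d)^⊗m`. -/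
def powMul (c d : C) : ∀ m, pow c m ⊗ pow d m ≅ pow (c ⊗ d) m
  | 0 => λ_ (𝟙_ C)
  | m + 1 => exch (pow c m) c (pow d m) d ≪≫ whiskerRightIso (powMul c d m) (c ⊗ d)

/-- The canonical coherence isomorphism `σ : I ≅ I^⊗m`. -/
def powUnit : ∀ m, (𝟙_ C) ≅ (pow (𝟙_ C : C) m)
  | 0 => Iso.refl _
  | m + 1 => powUnit m ≪≫ (ρ_ _).symm

end

/-- A supply of a prop `P` in a symmetric monoidal category `C`:
for each object `c` a strong symmetric monoidal functor `s_c : P ⥤ C` with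
`s_c m = c^⊗m`, whose structure isomorphisms are the canonical coherence isos
(fields `map_id`, `map_comp`, `map_add`, `map_braid`), and which is compatible with
the monoidal product and unit of `C` (fields `tensor` and `unit`). -/
structure Supply (P : PROP) (C : Type u) [Category.{v} C] [MonoidalCategory C]
    [SymmetricCategory C] where
  map : ∀ (c : C) {m n : ℕ}, P.Hom m n → (pow c m ⟶ pow c n)
  map_id : ∀ (c : C) (m : ℕ), map c (P.id m) = 𝟙 (pow c m)
  map_comp : ∀ (c : C) {m n p : ℕ} (μ : P.Hom m n) (ν : P.Hom n p),
    map c (P.comp μ ν) = map c μ ≫ map c ν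
  map_add : ∀ (c : C) {m₁ n₁ m₂ n₂ : ℕ} (μ : P.Hom m₁ n₁) (ν : P.Hom m₂ n₂),
    (powAdd c m₁ m₂).hom ≫ map c (P.add μ ν) = (map c μ ⊗ₘ map c ν) ≫ (powAdd c n₁ n₂).hom
  map_braid : ∀ (c : C) (m n : ℕ),
    map c (P.braid m n) =
      (powAdd c m n).inv ≫ (β_ (pow c m) (pow c n)).hom ≫ (powAdd c n m).hom
  tensor : ∀ (c d : C) {m n : ℕ} (μ : P.Hom m n),
    (map c μ ⊗ₘ map d μ) ≫ (powMul c d n).hom = (powMul c d m).hom ≫ map (c ⊗ d) μ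
  unit : ∀ {m n : ℕ} (μ : P.Hom m n),
    (powUnit m).hom ≫ map (𝟙_ C) μ = (powUnit n).hom

/-- `f : c ⟶ d` is an `s`-homomorphism. -/
def Supply.IsHomomorphism {P : PROP} {C : Type u} [Category.{v} C] [MonoidalCategory C]
    [SymmetricCategory C] (s : Supply P C) {c d : C} (f : c ⟶ d) : Prop :=
  ∀ {m n : ℕ} (μ : P.Hom m n), powHom f m ≫ s.map d μ = s.map c μ ≫ powHom f n

/-!
Identities and composites are formal, since `f ↦ f^⊗m` is a functor. For tensor products, the
axiom `Supply.tensor` exhibits `s_{c ⊗ d}(μ)` as `s_c(μ) ⊗ s_d(μ)` conjugated by `σ`, and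
naturality of `σ` exhibits `(f₁ ⊗ f₂)^⊗m` as `f₁^⊗m ⊗ f₂^⊗m` conjugated by `σ`; after the
conjugations cancel, the claim is the tensor product of the two homomorphism squares.
-/

section PowHom

variable {C : Type u} [Category.{v} C] [MonoidalCategory C]

lemma powHom_id (c : C) : ∀ m, powHom (𝟙 c) m = 𝟙 (pow c m)
  | 0 => rfl
  | m + 1 => by simp [powHom, pow, powHom_id c m]

lemma powHom_comp {c d e : C} (f : c ⟶ d) (g : d ⟶ e) :
    ∀ m, powHom (f ≫ g) m = powHom f m ≫ powHom g m
  | 0 => by simp [powHom, pow]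
  | m + 1 => by simp [powHom, pow, powHom_comp f g m, tensorHom_comp_tensorHom]

variable [SymmetricCategory C]

lemma exch_hom_eq_tensorμ (a b e f : C) : (exch a b e f).hom = tensorμ a b e f := by
  simp [exch, tensorμ]

lemma powMul_hom_naturality {c₁ d₁ c₂ d₂ : C} (f₁ : c₁ ⟶ d₁) (f₂ : c₂ ⟶ d₂) :
    ∀ m, (powHom f₁ m ⊗ₘ powHom f₂ m) ≫ (powMul d₁ d₂ m).hom =
      (powMul c₁ c₂ m).hom ≫ powHom (f₁ ⊗ₘ f₂) m
  | 0 => by simp [powHom, powMul, pow]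
  | m + 1 => by
    simp only [powHom, pow, powMul, Iso.trans_hom, whiskerRightIso_hom, exch_hom_eq_tensorμ,
      tensorμ_natural_assoc]
    rw [← tensorHom_id, ← tensorHom_id, tensorHom_comp_tensorHom, Category.assoc,
      tensorHom_comp_tensorHom, powMul_hom_naturality f₁ f₂ m, Category.comp_id, Category.id_comp]

lemma powHom_tensorHom {c₁ d₁ c₂ d₂ : C} (f₁ : c₁ ⟶ d₁) (f₂ : c₂ ⟶ d₂) (m : ℕ) :
    powHom (f₁ ⊗ₘ f₂) m =
      (powMul c₁ c₂ m).inv ≫ (powHom f₁ m ⊗ₘ powHom f₂ m) ≫ (powMul d₁ d₂ m).hom := by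
  rw [powMul_hom_naturality, Iso.inv_hom_id_assoc]

end PowHom

namespace Supply

variable {P : PROP} {C : Type u} [Category.{v} C] [MonoidalCategory C] [SymmetricCategory C]
  (s : Supply P C)

lemma map_tensorObj (c d : C) {m n : ℕ} (μ : P.Hom m n) :
    s.map (c ⊗ d) μ = (powMul c d m).inv ≫ (s.map c μ ⊗ₘ s.map d μ) ≫ (powMul c d n).hom := by
  rw [s.tensor, Iso.inv_hom_id_assoc]

lemma isHomomorphism_id (c : C) : s.IsHomomorphism (𝟙 c) := by
  intro m n μ
  simp [powHom_id]

variable {s}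

lemma IsHomomorphism.comp {c d e : C} {f : c ⟶ d} {g : d ⟶ e}
    (hf : s.IsHomomorphism f) (hg : s.IsHomomorphism g) : s.IsHomomorphism (f ≫ g) := by
  intro m n μ
  rw [powHom_comp, powHom_comp, Category.assoc, hg μ, ← Category.assoc, hf μ, Category.assoc]

lemma IsHomomorphism.tensorHom {c₁ d₁ c₂ d₂ : C} {f₁ : c₁ ⟶ d₁} {f₂ : c₂ ⟶ d₂}
    (h₁ : s.IsHomomorphism f₁) (h₂ : s.IsHomomorphism f₂) : s.IsHomomorphism (f₁ ⊗ₘ f₂) := by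
  intro m n μ
  simp only [powHom_tensorHom, map_tensorObj, Category.assoc, Iso.hom_inv_id_assoc,
    tensorHom_comp_tensorHom_assoc, h₁ μ, h₂ μ]

end Supply

/-- For any supply `s` of a prop `P` in `C`: identities are
`s`-homomorphisms, and `s`-homomorphisms are closed under composition and
under the monoidal product. -/
theorem homomorphisms_monoidal_subcategory (P : PROP) {C : Type u} [Category.{v} C]
    [MonoidalCategory C] [SymmetricCategory C] (s : Supply P C) :
    (∀ c : C, s.IsHomomorphism (𝟙 c)) ∧
    (∀ {c d e : C} (f : c ⟶ d) (g : d ⟶ e),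
      s.IsHomomorphism f → s.IsHomomorphism g → s.IsHomomorphism (f ≫ g)) ∧
    (∀ {c₁ d₁ c₂ d₂ : C} (f₁ : c₁ ⟶ d₁) (f₂ : c₂ ⟶ d₂),
      s.IsHomomorphism f₁ → s.IsHomomorphism f₂ → s.IsHomomorphism (f₁ ⊗ₘ f₂)) :=
  ⟨s.isHomomorphism_id, fun _ _ hf hg => hf.comp hg, fun _ _ h₁ h₂ => h₁.tensorHom h₂⟩
end

section
/- Let P be a prop, let s be a supply of P in a symmetric monoidal category C, let t be a supply of P in a symmetric monoidal category D, and let (F, φ) : C → D be a strong symmetric monoidal functor that preserves the supply. Then for all objects c, c' of C the monoidal structure isomorphism φ_{c,c'} : F(c) ⊗ F(c') → F(c ⊗ c') is a t-homomorphism, and the unit structure isomorphism φ : I_D → F(I_C) is a t-homomorphism. -/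
open CategoryTheory MonoidalCategory

universe v u

section
variable {C : Type u} [Category.{v} C] [MonoidalCategory C]
  {D : Type*} [Category D] [MonoidalCategory D]

/-- The canonical isomorphism `(F c)^⊗m ≅ F (c^⊗m)` built from the structure
isomorphisms of a strong monoidal functor `F`. -/
def powComparison (F : C ⥤ D) [F.Monoidal] (c : C) :
    ∀ m : ℕ, pow (F.obj c) m ≅ F.obj (pow c m)
  | 0 => Functor.Monoidal.εIso F
  | m + 1 => whiskerRightIso (powComparison F c m) (F.obj c) ≪≫
      Functor.Monoidal.μIso F (pow c m) c

end

/-- A strong symmetric monoidal functor `(F, φ) : C ⥤ D` preserves the supplies `s` and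
`t` if `t_{F c}(μ) ≫ φ⁽ⁿ⁾_c = φ⁽ᵐ⁾_c ≫ F (s_c μ)` for all `c` and all `μ : m ⟶ n` in `P`,
where `φ⁽ᵐ⁾_c : (F c)^⊗m ≅ F (c^⊗m)` is the canonical isomorphism built from the
structure isomorphisms of `F`. -/
def PreservesSupply {P : PROP} {C : Type u} [Category.{v} C] [MonoidalCategory C]
    [SymmetricCategory C] {D : Type*} [Category D] [MonoidalCategory D]
    [SymmetricCategory D] (s : Supply P C) (t : Supply P D)
    (F : C ⥤ D) [F.Braided] : Prop :=
  ∀ (c : C) {m n : ℕ} (μ : P.Hom m n),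
    t.map (F.obj c) μ ≫ (powComparison F c n).hom =
      (powComparison F c m).hom ≫ F.map (s.map c μ)

/-!
Transported along the comparison isomorphisms `(F c)^⊗m ≅ F (c^⊗m)`, the `m`-th tensor power of
`φ_{c,c'}` becomes `σ⁻¹ ≫ (φ⁽ᵐ⁾_c ⊗ φ⁽ᵐ⁾_{c'}) ≫ φ_{c^⊗m, c'^⊗m} ≫ F σ`, and that of `φ` becomes
`σ⁻¹ ≫ φ ≫ F σ` (induction on `m`; the inductive step for `φ_{c,c'}` is the compatibility of the
tensorator of a braided functor with the middle-four interchange). Every factor commutes with the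
action of a morphism of `P`: the maps `σ` by the axioms of a supply, the maps `φ⁽ᵐ⁾` because `F`
preserves the supply, and `φ_{-,-}` by naturality. Pasting these commutative squares side by side
gives the claim.
-/

open Functor.LaxMonoidal

lemma CategoryTheory.CommSq.tensorHom {C : Type u} [Category.{v} C] [MonoidalCategory C]
    {W₁ X₁ Y₁ Z₁ W₂ X₂ Y₂ Z₂ : C}
    {f₁ : W₁ ⟶ X₁} {g₁ : W₁ ⟶ Y₁} {h₁ : X₁ ⟶ Z₁} {i₁ : Y₁ ⟶ Z₁}
    {f₂ : W₂ ⟶ X₂} {g₂ : W₂ ⟶ Y₂} {h₂ : X₂ ⟶ Z₂} {i₂ : Y₂ ⟶ Z₂}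
    (sq₁ : CommSq f₁ g₁ h₁ i₁) (sq₂ : CommSq f₂ g₂ h₂ i₂) :
    CommSq (f₁ ⊗ₘ f₂) (g₁ ⊗ₘ g₂) (h₁ ⊗ₘ h₂) (i₁ ⊗ₘ i₂) :=
  ⟨by rw [tensorHom_comp_tensorHom, tensorHom_comp_tensorHom, sq₁.w, sq₂.w]⟩

lemma exch_hom {C : Type u} [Category.{v} C] [MonoidalCategory C] [SymmetricCategory C]
    (a b e f : C) : (exch a b e f).hom = tensorμ a b e f := by
  simp [exch, tensorμ]

lemma exch_inv_comp_μ_comp_map_exch_hom {C : Type u} [Category.{v} C] [MonoidalCategory C]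
    [SymmetricCategory C] {D : Type*} [Category D] [MonoidalCategory D] [SymmetricCategory D]
    (F : C ⥤ D) [F.LaxBraided] {a a' : D} {x x' : C} (g : a ⟶ F.obj x) (g' : a' ⟶ F.obj x')
    (y y' : C) :
    (exch a (F.obj y) a' (F.obj y')).inv ≫
        ((g ▷ F.obj y ≫ μ F x y) ⊗ₘ (g' ▷ F.obj y' ≫ μ F x' y')) ≫
          μ F (x ⊗ y) (x' ⊗ y') ≫ F.map (exch x y x' y').hom =
      (((g ⊗ₘ g') ≫ μ F x x') ⊗ₘ μ F y y') ≫ μ F (x ⊗ x') (y ⊗ y') := by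
  rw [Iso.inv_comp_eq, exch_hom, exch_hom, ← tensorHom_comp_tensorHom_assoc,
    ← tensorμ_comp_μ_tensorHom_μ_comp_μ, ← tensorHom_id, ← tensorHom_id,
    tensorμ_natural_assoc, tensorHom_comp_tensorHom_assoc, id_tensorHom_id, Category.id_comp]

section PowComparison

variable {C : Type u} [Category.{v} C] [MonoidalCategory C]
  {D : Type*} [Category D] [MonoidalCategory D]

lemma powHom_succ_comp_powComparison_hom (F : C ⥤ D) [F.Monoidal] {a : D} {c : C}
    (f : a ⟶ F.obj c) (m : ℕ) :
    powHom f (m + 1) ≫ (powComparison F c (m + 1)).hom =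
      ((powHom f m ≫ (powComparison F c m).hom) ⊗ₘ f) ≫ μ F (pow c m) c := by
  change (powHom f m ⊗ₘ f) ≫ (powComparison F c m).hom ▷ F.obj c ≫ μ F (pow c m) c = _
  rw [← tensorHom_id, tensorHom_comp_tensorHom_assoc, Category.comp_id]

lemma powHom_ε (F : C ⥤ D) [F.Monoidal] (m : ℕ) :
    powHom (ε F) m = ((powUnit m).inv ≫ ε F ≫ F.map (powUnit m).hom) ≫
      (powComparison F (𝟙_ C) m).inv := by
  rw [Iso.eq_comp_inv]
  induction m with
  | zero => simp [pow, powHom, powUnit, powComparison]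
  | succ m ih =>
      rw [powHom_succ_comp_powComparison_hom, ih, tensorHom_ε_comp_μ]
      simp [pow, powUnit]

lemma powHom_μ [SymmetricCategory C] [SymmetricCategory D] (F : C ⥤ D) [F.Braided]
    (c c' : C) (m : ℕ) :
    powHom (μ F c c') m =
      ((powMul (F.obj c) (F.obj c') m).inv ≫
        ((powComparison F c m).hom ⊗ₘ (powComparison F c' m).hom) ≫
          μ F (pow c m) (pow c' m) ≫ F.map (powMul c c' m).hom) ≫
        (powComparison F (c ⊗ c') m).inv := by
  rw [Iso.eq_comp_inv]
  induction m with
  | zero => simp [pow, powHom, powMul, powComparison, ε_tensorHom_comp_μ_assoc]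
  | succ m ih =>
      rw [powHom_succ_comp_powComparison_hom, ih]
      change _ = ((powMul (F.obj c) (F.obj c') m).inv ▷ (F.obj c ⊗ F.obj c') ≫
          (exch (pow (F.obj c) m) (F.obj c) (pow (F.obj c') m) (F.obj c')).inv) ≫
        (((powComparison F c m).hom ▷ F.obj c ≫ μ F (pow c m) c) ⊗ₘ
          ((powComparison F c' m).hom ▷ F.obj c' ≫ μ F (pow c' m) c')) ≫
        μ F (pow c m ⊗ c) (pow c' m ⊗ c') ≫
        F.map ((exch (pow c m) c (pow c' m) c').hom ≫ (powMul c c' m).hom ▷ (c ⊗ c'))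
      simp only [Functor.map_comp, Category.assoc]
      slice_rhs 2 5 => rw [exch_inv_comp_μ_comp_map_exch_hom]
      rw [Category.assoc, ← μ_natural_left]
      simp only [← tensorHom_id, tensorHom_comp_tensorHom_assoc, Category.id_comp,
        Category.comp_id, Category.assoc]

end PowComparison

section Squares

variable {P : PROP} {C : Type u} [Category.{v} C] [MonoidalCategory C] [SymmetricCategory C]
  {m n : ℕ} (ν : P.Hom m n)

lemma Supply.commSq_powMul (s : Supply P C) (c d : C) :
    CommSq (powMul c d m).hom (s.map c ν ⊗ₘ s.map d ν) (s.map (c ⊗ d) ν) (powMul c d n).hom :=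
  ⟨(s.tensor c d ν).symm⟩

lemma Supply.commSq_powUnit (s : Supply P C) :
    CommSq (powUnit m).hom (𝟙 _) (s.map (𝟙_ C) ν) (powUnit n).hom :=
  ⟨by rw [s.unit, Category.id_comp]⟩

lemma PreservesSupply.commSq_powComparison {D : Type*} [Category D] [MonoidalCategory D]
    [SymmetricCategory D] {s : Supply P C} {t : Supply P D} {F : C ⥤ D} [F.Braided]
    (hF : PreservesSupply s t F) (c : C) :
    CommSq (powComparison F c m).hom (t.map (F.obj c) ν) (F.map (s.map c ν))
      (powComparison F c n).hom :=
  ⟨(hF c ν).symm⟩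

end Squares

/-- **Statement 12.** If a strong symmetric monoidal functor `(F, φ) : C ⥤ D` preserves
the supplies `s` (of `P` in `C`) and `t` (of `P` in `D`), then all the structure
isomorphisms `φ_{c,c'} : F c ⊗ F c' ⟶ F (c ⊗ c')` and `φ : 𝟙_ D ⟶ F (𝟙_ C)` are
`t`-homomorphisms. -/
theorem strongators_are_homomorphisms {P : PROP} {C : Type u} [Category.{v} C]
    [MonoidalCategory C] [SymmetricCategory C] {D : Type*} [Category D]
    [MonoidalCategory D] [SymmetricCategory D] (s : Supply P C) (t : Supply P D)
    (F : C ⥤ D) [F.Braided] (hF : PreservesSupply s t F) :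
    (∀ c c' : C, t.IsHomomorphism (Functor.LaxMonoidal.μ F c c')) ∧
      t.IsHomomorphism (Functor.LaxMonoidal.ε F) := by
  constructor
  · intro c c' m n ν
    have square := (t.commSq_powMul ν (F.obj c) (F.obj c')).horiz_inv
      |>.horiz_comp ((hF.commSq_powComparison ν c).tensorHom (hF.commSq_powComparison ν c'))
      |>.horiz_comp ⟨(μ_natural F (s.map c ν) (s.map c' ν)).symm⟩
      |>.horiz_comp ((s.commSq_powMul ν c c').map F)
      |>.horiz_comp (hF.commSq_powComparison ν (c ⊗ c')).horiz_inv
    rw [powHom_μ, powHom_μ]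
    simpa only [Category.assoc] using square.w
  · intro m n ν
    have square := (t.commSq_powUnit ν).horiz_inv
      |>.horiz_comp (⟨by simp⟩ : CommSq (ε F) (𝟙 _) (F.map (𝟙 _)) (ε F))
      |>.horiz_comp ((s.commSq_powUnit ν).map F)
      |>.horiz_comp (hF.commSq_powComparison ν (𝟙_ C)).horiz_inv
    rw [powHom_ε, powHom_ε]
    simpa only [Category.assoc] using square.w
end
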